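/- Let A be a normed unital differential graded algebra over a commutative valued ring (R, ν_R). Let E′ ∈ ℝ, let b ∈ A¹ (a homogeneous element of degree 1) with ν_A(b) > 0, let c ∈ R with d(c·1_A) = 0, and let q ∈ A² with ν_A(q) ≥ E′. If d(b) − b² ≡ c·1_A + q (mod F^{E′}A), i.e. ν_A(d(b) − b² − c·1_A − q) > E′, then d(q) ≡ 0 (mod F^{E′}A), i.e. ν_A(d(q)) > E′. -/
import Mathlib


/-- A valuation on a commutative ring, valued in `ℝ ∪ {∞}`
(modeled as `EReal` while avoiding the value `⊥ = −∞`). -/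
structure IsRingValuation {R : Type*} [CommRing R] (ν : R → EReal) : Prop where
  ne_bot : ∀ r, ν r ≠ ⊥
  top_iff : ∀ r, ν r = ⊤ ↔ r = 0
  min_le_add : ∀ r₁ r₂, min (ν r₁) (ν r₂) ≤ ν (r₁ + r₂)
  map_mul : ∀ r₁ r₂, ν (r₁ * r₂) = ν r₁ + ν r₂

private lemma ereal_aux {E : ℝ} {x y : EReal} (hx : (0 : EReal) < x)
    (hy : (E : EReal) ≤ y) : (E : EReal) < x + y := by
  have hb : y ≠ ⊥ := fun h => by simp [h] at hy
  have := EReal.add_lt_add_of_lt_of_le' hx hy hb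
    (fun _ hE => absurd hE (EReal.coe_ne_top E))
  simpa using this

/-- In a normed unital differential graded algebra `A` over a commutative
valued ring `R` (grading `𝒜 : ℤ → Submodule R A`, differential `d` of degree `+1` with
`d ∘ d = 0` and the graded Leibniz rule, norm `ν_A`), if `b ∈ A¹` with `ν_A(b) > 0`,
`c ∈ R` with `d(c·1) = 0`, and `q ∈ A²` with `ν_A(q) ≥ E′` satisfy
`d(b) − b² ≡ c·1 + q (mod F^{E′}A)`, then `d(q) ≡ 0 (mod F^{E′}A)`. -/
theorem dga_obstruction_closed {R A : Type*} [CommRing R] [Ring A] [Algebra R A]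
    (νR : R → EReal) (hνR : IsRingValuation νR)
    (𝒜 : ℤ → Submodule R A) (hgrading : DirectSum.IsInternal 𝒜)
    (hone : (1 : A) ∈ 𝒜 0)
    (hmul : ∀ (i j : ℤ) (x y : A), x ∈ 𝒜 i → y ∈ 𝒜 j → x * y ∈ 𝒜 (i + j))
    (d : A →ₗ[R] A)
    (hd_deg : ∀ (i : ℤ) (x : A), x ∈ 𝒜 i → d x ∈ 𝒜 (i + 1))
    (hdd : ∀ x : A, d (d x) = 0)
    (hleibniz : ∀ (i : ℤ) (x y : A), x ∈ 𝒜 i →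
      d (x * y) = d x * y + ((((-1 : ℤˣ) ^ i : ℤˣ) : ℤ)) • (x * d y))
    (νA : A → EReal)
    (hA_ne_bot : ∀ x, νA x ≠ ⊥)
    (hA_top_iff : ∀ x, νA x = ⊤ ↔ x = 0)
    (hA_add : ∀ x y, min (νA x) (νA y) ≤ νA (x + y))
    (hA_mul : ∀ x y, νA x + νA y ≤ νA (x * y))
    (hA_smul : ∀ (r : R) (x : A), νA (r • x) = νR r + νA x)
    (hA_d : ∀ x, νA x ≤ νA (d x))
    (E' : ℝ) (b : A) (hb : b ∈ 𝒜 1) (hbpos : (0 : EReal) < νA b)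
    (c : R) (hc : d (c • (1 : A)) = 0)
    (q : A) (hq : q ∈ 𝒜 2) (hqval : (E' : EReal) ≤ νA q)
    (hmc : (E' : EReal) < νA (d b - b * b - c • (1 : A) - q)) :
    (E' : EReal) < νA (d q) := by
  by_cases h1 : (1 : A) = 0
  · have hq0 : q = 0 := by rw [← mul_one q, h1, mul_zero]
    have : νA (d q) = ⊤ := (hA_top_iff _).mpr (by rw [hq0, map_zero])
    rw [this]
    exact EReal.coe_lt_top E'
  -- the ring R is nontrivial, so νR 1 = 0 and νR (-1) = 0
  have hR1 : νR (1 : R) = 0 := by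
    have h := hνR.map_mul 1 1
    rw [one_mul] at h
    have hne : νR (1 : R) ≠ ⊤ := by
      intro ht
      have : (1 : R) = 0 := (hνR.top_iff 1).mp ht
      exact h1 (by rw [← map_one (algebraMap R A), this, map_zero])
    lift νR (1 : R) to ℝ using ⟨hne, hνR.ne_bot 1⟩ with a
    have : a = a + a := by exact_mod_cast h
    have : a = 0 := by linarith
    exact_mod_cast this
  have hRneg : νR (-1 : R) = 0 := by
    have h := hνR.map_mul (-1) (-1)
    rw [neg_mul_neg, one_mul, hR1] at h
    have hne : νR (-1 : R) ≠ ⊤ := by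
      intro ht
      rw [ht] at h
      simp at h
    lift νR (-1 : R) to ℝ using ⟨hne, hνR.ne_bot (-1)⟩ with a
    have : (0 : ℝ) = a + a := by exact_mod_cast h
    have : a = 0 := by linarith
    exact_mod_cast this
  have hneg : ∀ x : A, νA (-x) = νA x := fun x => by
    rw [← neg_one_smul R x, hA_smul, hRneg, zero_add]
  have hsub : ∀ x y : A, min (νA x) (νA y) ≤ νA (x - y) := fun x y => by
    rw [sub_eq_add_neg]
    simpa [hneg] using hA_add x (-y)
  set e := d b - b * b - c • (1 : A) - q with hedef
  have hdb : d b = b * b + c • (1 : A) + q + e := by rw [hedef]; abel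
  have hdb2 : d (b * b) = d b * b - b * d b := by
    have h := hleibniz 1 b b hb
    simpa [sub_eq_add_neg] using h
  have h2 : d (b * b) = q * b + e * b - b * q - b * e := by
    rw [hdb2, hdb]
    have hub : c • (1 : A) * b = b * (c • (1 : A)) := by
      rw [smul_mul_assoc, mul_smul_comm, one_mul, mul_one]
    simp only [add_mul, mul_add, mul_assoc]
    rw [hub]
    abel
  have h4 : d (b * b) + (d (c • (1 : A)) + (d q + d e)) = 0 := by
    rw [← map_add, ← map_add, ← map_add,
      show b * b + (c • (1 : A) + (q + e)) = d b by rw [hdb]; abel, hdd]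
  rw [hc, zero_add] at h4
  have h5 : d q + d e = -d (b * b) := eq_neg_of_add_eq_zero_right h4
  have hkey : d q = b * q + b * e - q * b - e * b - d e := by
    have : d q = -d (b * b) - d e := eq_sub_of_add_eq h5
    rw [this, h2]
    abel
  have heval : (E' : EReal) < νA e := hmc
  have hbq : (E' : EReal) < νA (b * q) :=
    lt_of_lt_of_le (ereal_aux hbpos hqval) (hA_mul b q)
  have hqb : (E' : EReal) < νA (q * b) := by
    refine lt_of_lt_of_le ?_ (hA_mul q b)
    rw [add_comm]
    exact ereal_aux hbpos hqval
  have hbe : (E' : EReal) < νA (b * e) :=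
    lt_of_lt_of_le (ereal_aux hbpos heval.le) (hA_mul b e)
  have heb : (E' : EReal) < νA (e * b) := by
    refine lt_of_lt_of_le ?_ (hA_mul e b)
    rw [add_comm]
    exact ereal_aux hbpos heval.le
  have hde : (E' : EReal) < νA (d e) := lt_of_lt_of_le heval (hA_d e)
  have s1 : (E' : EReal) < νA (b * q + b * e) :=
    lt_of_lt_of_le (lt_min hbq hbe) (hA_add _ _)
  have s2 : (E' : EReal) < νA (b * q + b * e - q * b) :=
    lt_of_lt_of_le (lt_min s1 hqb) (hsub _ _)
  have s3 : (E' : EReal) < νA (b * q + b * e - q * b - e * b) :=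
    lt_of_lt_of_le (lt_min s2 heb) (hsub _ _)
  have s4 : (E' : EReal) < νA (b * q + b * e - q * b - e * b - d e) :=
    lt_of_lt_of_le (lt_min s3 hde) (hsub _ _)
  rw [hkey]
  exact s4
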